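/- For the quiver of the local Calabi–Yau threefold over dP1 with vertices 1,2,3,4, arrows a: 1→2, b: 1→3, c_1,c_2: 2→3, d_1,d_2,d_3: 3→4, R_1,R_2: 4→1, R_3: 4→2, and potential S = R_3(d_3 c_1 − d_1 c_2) + R_1(d_1 b − d_2 c_1 a) + R_2(d_2 c_2 a − d_3 b), the potential S is good: every arrow appears in at least two terms of S and no path of length two appears in two distinct terms. -/

import Mathlib

/-- A quiver given by a vertex set, an arrow set and source/target maps. -/
structure Quiv where
  V : Type
  E : Type
  s : E → V
  t : E → V

namespace Quiv

/-- A path `a₁ a₂ ⋯ aₙ`, written with the composition-of-functions convention,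
is a list of arrows such that the source of each arrow is the target of the next one. -/
def IsPath (q : Quiv) : List q.E → Prop
  | [] => True
  | [_] => True
  | a :: b :: l => q.s a = q.t b ∧ IsPath q (b :: l)

variable (q : Quiv)

/-- The source of a (nonempty) path. -/
def pSrc (l : List q.E) : Option q.V := l.getLast?.map q.s

/-- The target of a (nonempty) path. -/
def pTgt (l : List q.E) : Option q.V := l.head?.map q.t

/-- A cycle is a nonempty path whose source equals its target. -/
def IsCycle (l : List q.E) : Prop := l ≠ [] ∧ q.IsPath l ∧ q.pSrc l = q.pTgt l

variable (K : Type) [Field K]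

open Classical in
/-- The cyclic derivative of a single cycle `a₁ ⋯ aₙ` with respect to an arrow `x`:
`∑ₖ δ(x, aₖ) • a_{k+1} ⋯ aₙ a₁ ⋯ a_{k-1}`, as an element of the vector space
spanned by paths. -/
noncomputable def cycDerList (x : q.E) (l : List q.E) : List q.E →₀ K :=
  ∑ k ∈ Finset.range l.length,
    if l[k]? = some x then Finsupp.single (l.drop (k + 1) ++ l.take k) 1 else 0

/-- The cyclic derivative of a potential (a linear combination of cycles)
with respect to an arrow `x`, extended linearly. -/
noncomputable def cycDer (x : q.E) (S : List q.E →₀ K) : List q.E →₀ K :=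
  S.sum fun l c => c • q.cycDerList K x l

/-- Two potentials are cyclically equivalent if their difference lies in the span of
the elements `a₁ ⋯ a_{n-1} aₙ - a₂ ⋯ aₙ a₁` for cycles `a₁ ⋯ aₙ`. -/
def CycEquiv (S S' : List q.E →₀ K) : Prop :=
  S - S' ∈ Submodule.span K
    {x : List q.E →₀ K | ∃ l : List q.E, q.IsCycle l ∧
      x = Finsupp.single l 1 - Finsupp.single (l.rotate 1) 1}


/-- The cyclically consecutive pairs of arrows of a cycle `a₁ ⋯ aₙ`:
`(a₁,a₂), …, (a_{n-1},aₙ), (aₙ,a₁)`; these record its subpaths of length two. -/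
def cycPairs (l : List q.E) : List (q.E × q.E) := l.zip (l.rotate 1)

open Classical in
/-- A potential `S` is good if it is a linear combination of cycles, each arrow of the quiver
appears at least twice among its terms, and no subpath of length two appears twice. -/
def Good (S : List q.E →₀ K) : Prop :=
  (∀ l ∈ S.support, q.IsCycle l) ∧
  (∀ e : q.E, 2 ≤ ∑ l ∈ S.support, l.count e) ∧
  (∀ p : q.E × q.E, (∑ l ∈ S.support, (q.cycPairs l).count p) ≤ 1)

end Quiv

/-- The arrows of the completed quiver of the local Calabi–Yau threefold over `dP1`:
`a : 1 → 2`, `b : 1 → 3`, `c₁ c₂ : 2 → 3`, `d₁ d₂ d₃ : 3 → 4`, `R₁ R₂ : 4 → 1`,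
`R₃ : 4 → 2`. -/
inductive DP1Arr : Type
  | a | b | c1 | c2 | d1 | d2 | d3 | R1 | R2 | R3
deriving DecidableEq

open DP1Arr in
/-- The completed `dP1` quiver, with vertices `1, 2, 3, 4` (encoded as `Fin 4`). -/
def dP1 : Quiv where
  V := Fin 4
  E := DP1Arr
  s := fun e => match e with
    | a => 0 | b => 0 | c1 => 1 | c2 => 1 | d1 => 2 | d2 => 2 | d3 => 2
    | R1 => 3 | R2 => 3 | R3 => 3
  t := fun e => match e with
    | a => 1 | b => 2 | c1 => 2 | c2 => 2 | d1 => 3 | d2 => 3 | d3 => 3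
    | R1 => 0 | R2 => 0 | R3 => 1

open DP1Arr in
/-- The potential `S = R₃(d₃c₁ − d₁c₂) + R₁(d₁b − d₂c₁a) + R₂(d₂c₂a − d₃b)` of the
completed `dP1` quiver, as a linear combination of cycles (written as lists of arrows in
the composition-of-functions convention). -/
noncomputable def dP1Pot (K : Type) [Field K] : List dP1.E →₀ K :=
  Finsupp.single [R3, d3, c1] 1 - Finsupp.single [R3, d1, c2] 1
    + Finsupp.single [R1, d1, b] 1 - Finsupp.single [R1, d2, c1, a] 1
    + Finsupp.single [R2, d2, c2, a] 1 - Finsupp.single [R2, d3, b] 1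

/-!
Goodness of a potential depends only on its support. The six cycles of `S` are pairwise
distinct, so its support consists of exactly these six cycles (all coefficients are `±1`), and
the three conditions become a finite check on six explicit lists of arrows.
-/

namespace Quiv

variable (q : Quiv)

instance decidableIsPath [DecidableEq q.V] : DecidablePred q.IsPath
  | [] => isTrue trivial
  | [_] => isTrue trivial
  | a :: b :: l =>
    haveI := decidableIsPath (b :: l)
    inferInstanceAs (Decidable (q.s a = q.t b ∧ q.IsPath (b :: l)))

instance [DecidableEq q.V] [DecidableEq q.E] : DecidablePred q.IsCycle :=
  fun _ => inferInstanceAs (Decidable (_ ∧ _ ∧ _))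

def IsGoodCycleSet [DecidableEq q.E] (C : Finset (List q.E)) : Prop :=
  (∀ l ∈ C, q.IsCycle l) ∧
  (∀ e : q.E, 2 ≤ ∑ l ∈ C, l.count e) ∧
  (∀ p : q.E × q.E, (∑ l ∈ C, (q.cycPairs l).count p) ≤ 1)

instance [DecidableEq q.V] [DecidableEq q.E] [Fintype q.E] :
    DecidablePred q.IsGoodCycleSet :=
  fun _ => inferInstanceAs (Decidable (_ ∧ _ ∧ _))

/-- `Good` counts arrows with the classical `BEq` instance, on which `decide` gets stuck;
`IsGoodCycleSet` is the same condition for the given decidable equality. -/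
theorem good_iff_isGoodCycleSet_support (K : Type) [Field K] [DecidableEq q.E]
    (S : List q.E →₀ K) : q.Good K S ↔ q.IsGoodCycleSet S.support := by
  unfold Good IsGoodCycleSet
  convert Iff.rfl

end Quiv

namespace Finsupp

variable {ι G : Type*} [DecidableEq ι] [AddGroup G] {f : ι →₀ G} {s : Finset ι} {a : ι} {b : G}

theorem support_add_single_of_support_eq (hf : f.support = s) (ha : a ∉ s) (hb : b ≠ 0) :
    (f + single a b).support = insert a s := by
  rw [support_add_single (hf ▸ ha) hb, Finset.cons_eq_insert, hf]

theorem support_sub_single_of_support_eq (hf : f.support = s) (ha : a ∉ s) (hb : b ≠ 0) :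
    (f - single a b).support = insert a s := by
  rw [sub_eq_add_neg, ← single_neg]
  exact support_add_single_of_support_eq hf ha (neg_ne_zero.mpr hb)

end Finsupp

instance : Fintype DP1Arr :=
  ⟨{.a, .b, .c1, .c2, .d1, .d2, .d3, .R1, .R2, .R3}, fun x => by cases x <;> decide⟩

-- Lets instance search see `dP1.E = DP1Arr` and `dP1.V = Fin 4`.
attribute [reducible] dP1

open DP1Arr in
theorem dP1Pot_support (K : Type) [Field K] :
    (dP1Pot K).support =
      {[R2, d3, b], [R2, d2, c2, a], [R1, d2, c1, a], [R1, d1, b], [R3, d1, c2], [R3, d3, c1]} := by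
  unfold dP1Pot
  open Finsupp in
  repeat' first
    | refine support_sub_single_of_support_eq ?_ (by decide) one_ne_zero
    | refine support_add_single_of_support_eq ?_ (by decide) one_ne_zero
  exact support_single _ one_ne_zero

/-- The potential `S = R₃(d₃c₁ − d₁c₂) + R₁(d₁b − d₂c₁a) + R₂(d₂c₂a − d₃b)`
on the completed `dP1` quiver is good: every arrow appears in at least two terms of `S` and no
path of length two appears in two distinct terms. -/
theorem dP1_potential_is_good (K : Type) [Field K] :
    dP1.Good K (dP1Pot K) := by
  rw [Quiv.good_iff_isGoodCycleSet_support, dP1Pot_support]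
  decide
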